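/- For every x > 0, the derivative of f satisfies the identity f′(x) = 1 − (N−1) f(x)/x − f(x)². -/

import Mathlib

/-!
With `J_k(x) = ∫₀^π e^{x cos θ} sin^k θ dθ` we have `f = x J_N / ((N-1) J_{N-2})`.
Differentiating under the integral sign gives `J_k' = ∫₀^π e^{x cos θ} cos θ sin^k θ dθ`.
Integrating by parts against `∂_θ e^{x cos θ} = -x sin θ e^{x cos θ}` (the boundary terms vanish
since `sin 0 = sin π = 0`) yields `x J_N = (N-1) J_{N-2}'` and `x J_N' = (N-1) J_{N-2} - N J_N`;
substituting both into the quotient rule for `f'` gives the Riccati equation.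
-/

open MeasureTheory Real

noncomputable section

/-- The ratio `I_{N/2}(x) / I_{N/2-1}(x)` of modified Bessel functions of the first kind,
expressed via the integral representation
`f(x) = (x/(N-1)) * (∫₀^π e^{x cos θ} sin^N θ dθ) / (∫₀^π e^{x cos θ} sin^{N-2} θ dθ)`. -/
def besselRatio (N : ℕ) (x : ℝ) : ℝ :=
  x / ((N : ℝ) - 1) *
      (∫ θ in (0:ℝ)..π, Real.exp (x * Real.cos θ) * Real.sin θ ^ N) /
    ∫ θ in (0:ℝ)..π, Real.exp (x * Real.cos θ) * Real.sin θ ^ (N - 2)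

open intervalIntegral

section ExpCosIntegral

variable {a b : ℝ}

theorem hasDerivAt_integral_exp_mul_cos {g : ℝ → ℝ} (hg : Continuous g) (x : ℝ) :
    HasDerivAt (fun y => ∫ θ in a..b, exp (y * cos θ) * g θ)
      (∫ θ in a..b, exp (x * cos θ) * (cos θ * g θ)) x := by
  have hexp_le : ∀ y ∈ Metric.ball x 1, ∀ θ, exp (y * cos θ) ≤ exp (|x| + 1) := by
    intro y hy θ
    have hy' : |y| ≤ |x| + 1 := by
      have := abs_sub_abs_le_abs_sub y x
      rw [Metric.mem_ball, dist_eq] at hy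
      linarith
    refine exp_le_exp.mpr ((le_abs_self _).trans ?_)
    rw [abs_mul]
    nlinarith [abs_cos_le_one θ, abs_nonneg y, abs_nonneg (cos θ)]
  refine (hasDerivAt_integral_of_dominated_loc_of_deriv_le
    (F := fun y θ => exp (y * cos θ) * g θ) (F' := fun y θ => exp (y * cos θ) * (cos θ * g θ))
    (bound := fun θ => exp (|x| + 1) * |g θ|)
    (Metric.ball_mem_nhds x one_pos)
    (.of_forall fun y => (by fun_prop : Continuous _).aestronglyMeasurable)
    ((by fun_prop : Continuous _).intervalIntegrable _ _)
    (by fun_prop : Continuous _).aestronglyMeasurable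
    (.of_forall fun θ _ y hy => ?_) ((by fun_prop : Continuous _).intervalIntegrable _ _)
    (.of_forall fun θ _ y _ => ?_)).2
  · rw [norm_eq_abs, abs_mul, abs_mul, abs_of_pos (exp_pos _), ← mul_assoc]
    gcongr
    simpa using mul_le_mul (hexp_le y hy θ) (abs_cos_le_one θ) (abs_nonneg _) (exp_pos _).le
  · simpa [mul_assoc] using ((hasDerivAt_mul_const (cos θ)).exp.mul_const (g θ))

theorem integral_exp_mul_cos_mul_deriv {v v' : ℝ → ℝ} (hv : ∀ θ, HasDerivAt v (v' θ) θ)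
    (hv' : Continuous v') (ha : v a = 0) (hb : v b = 0) (x : ℝ) :
    ∫ θ in a..b, exp (x * cos θ) * v' θ = x * ∫ θ in a..b, exp (x * cos θ) * (sin θ * v θ) := by
  have hu : ∀ θ, HasDerivAt (fun θ => exp (x * cos θ)) (exp (x * cos θ) * (-x * sin θ)) θ :=
    fun θ => by simpa [mul_neg] using ((hasDerivAt_cos θ).const_mul x).exp
  rw [integral_mul_deriv_eq_deriv_mul (fun θ _ => hu θ) (fun θ _ => hv θ)
    ((by fun_prop : Continuous _).intervalIntegrable _ _) (hv'.intervalIntegrable _ _), ha, hb,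
    ← intervalIntegral.integral_const_mul]
  simp only [mul_zero, sub_zero, zero_sub, ← intervalIntegral.integral_neg]
  congr 1
  ext θ
  ring

end ExpCosIntegral

/-- By Poisson's integral, `x ^ (k / 2) * besselIntegral k x` is a constant multiple of
`I_{k/2}(x)`. -/
def besselIntegral (k : ℕ) (x : ℝ) : ℝ :=
  ∫ θ in (0:ℝ)..π, exp (x * cos θ) * sin θ ^ k

def besselIntegralCos (k : ℕ) (x : ℝ) : ℝ :=
  ∫ θ in (0:ℝ)..π, exp (x * cos θ) * (cos θ * sin θ ^ k)

theorem besselIntegral_pos (k : ℕ) (x : ℝ) : 0 < besselIntegral k x :=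
  intervalIntegral_pos_of_pos_on ((by fun_prop : Continuous _).intervalIntegrable _ _)
    (fun θ hθ => by have := sin_pos_of_pos_of_lt_pi hθ.1 hθ.2; positivity) pi_pos

theorem hasDerivAt_besselIntegral (k : ℕ) (x : ℝ) :
    HasDerivAt (besselIntegral k) (besselIntegralCos k x) x :=
  hasDerivAt_integral_exp_mul_cos (by fun_prop) x

theorem mul_besselIntegral_add_two (m : ℕ) (x : ℝ) :
    x * besselIntegral (m + 2) x = (m + 1) * besselIntegralCos m x := by
  have hv (θ : ℝ) : HasDerivAt (fun θ => sin θ ^ (m + 1)) ((m + 1) * (cos θ * sin θ ^ m)) θ := by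
    refine ((hasDerivAt_sin θ).fun_pow (m + 1)).congr_deriv ?_
    push_cast
    ring
  have := integral_exp_mul_cos_mul_deriv (a := 0) (b := π) hv (by fun_prop) (by simp) (by simp) x
  simp only [← pow_succ', mul_left_comm _ (m + 1 : ℝ), intervalIntegral.integral_const_mul] at this
  exact this.symm

theorem mul_besselIntegralCos_add_two (m : ℕ) (x : ℝ) :
    x * besselIntegralCos (m + 2) x =
      (m + 1) * besselIntegral m x - (m + 2) * besselIntegral (m + 2) x := by
  have hv (θ : ℝ) : HasDerivAt (fun θ => cos θ * sin θ ^ (m + 1))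
      ((m + 1) * sin θ ^ m - (m + 2) * sin θ ^ (m + 2)) θ := by
    refine ((hasDerivAt_cos θ).fun_mul ((hasDerivAt_sin θ).fun_pow (m + 1))).congr_deriv ?_
    push_cast
    linear_combination ((m : ℝ) + 1) * sin θ ^ m * sin_sq_add_cos_sq θ
  have := integral_exp_mul_cos_mul_deriv (a := 0) (b := π) hv (by fun_prop) (by simp) (by simp) x
  have hlhs : ∫ θ in (0:ℝ)..π, exp (x * cos θ) * ((m + 1) * sin θ ^ m - (m + 2) * sin θ ^ (m + 2)) =
      (m + 1) * besselIntegral m x - (m + 2) * besselIntegral (m + 2) x := by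
    rw [besselIntegral, besselIntegral, ← intervalIntegral.integral_const_mul,
      ← intervalIntegral.integral_const_mul, ← intervalIntegral.integral_sub
        (Continuous.intervalIntegrable (by fun_prop) _ _)
        (Continuous.intervalIntegrable (by fun_prop) _ _)]
    congr 1
    ext θ
    ring
  have hrhs : ∫ θ in (0:ℝ)..π, exp (x * cos θ) * (sin θ * (cos θ * sin θ ^ (m + 1))) =
      besselIntegralCos (m + 2) x := by
    rw [besselIntegralCos]
    congr 1
    ext θ
    ring
  rw [hlhs, hrhs] at this
  exact this.symm

theorem besselRatio_add_two (m : ℕ) :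
    besselRatio (m + 2) =
      fun x => x / (m + 1) * besselIntegral (m + 2) x / besselIntegral m x := by
  ext x
  rw [besselRatio, Nat.add_sub_cancel, besselIntegral, besselIntegral]
  push_cast
  ring

/-- For every `x > 0`, `f'(x) = 1 - (N-1) f(x)/x - f(x)²`. -/
theorem besselRatio_deriv_identity (N : ℕ) (hN : 2 ≤ N) (x : ℝ) (hx : 0 < x) :
    deriv (besselRatio N) x =
      1 - ((N : ℝ) - 1) * besselRatio N x / x - besselRatio N x ^ 2 := by
  obtain ⟨m, rfl⟩ : ∃ m, N = m + 2 := ⟨N - 2, by omega⟩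
  have hpos := besselIntegral_pos m x
  have hderiv := (((hasDerivAt_id' x).div_const ((m : ℝ) + 1)).fun_mul
    (hasDerivAt_besselIntegral (m + 2) x)).fun_div (hasDerivAt_besselIntegral m x) hpos.ne'
  have hJ := mul_besselIntegral_add_two m x
  have hJcos := mul_besselIntegralCos_add_two m x
  rw [besselRatio_add_two, hderiv.deriv]
  push_cast
  field_simp [hx.ne']
  linear_combination
    ((m : ℝ) + 1) * besselIntegral m x * hJcos + x * besselIntegral (m + 2) x * hJ

end
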